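/- For κ > 1 and γ₁, γ₂ ∈ (0,1) with γ₁+γ₂ < 1, the number p* := (√(κ²(1-γ₁-γ₂)² + (γ₁-γ₂)² + 2κ(γ₁(1-γ₁)+γ₂(1-γ₂))) - 1)/(2(κ-1)) - (1-γ₁-γ₂)/2 satisfies the quadratic equation κ·p·(1+p-γ₁-γ₂) = (γ₁-p)(γ₂-p) and lies in the interval [max{0, γ₁+γ₂-1}, min{γ₁, γ₂}]. -/

import Mathlib

/-!
Writing `c := 1 - γ1 - γ2`, the equation is `q p = 0` for the quadratic
`q p = (κ - 1) p² + ((κ - 1) c + 1) p - γ1 γ2`, whose discriminant is exactly the radicand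
in `pStar`; so `pStar` is its larger root. Since `q 0 = -γ1 γ2 ≤ 0` while
`q γ1 = κ γ1 (1 - γ2) ≥ 0` and `q γ2 = κ γ2 (1 - γ1) ≥ 0` at points to the right of the vertex,
the larger root lies between `0` and `min γ1 γ2`.
-/

noncomputable def pStar (κ γ1 γ2 : ℝ) : ℝ :=
  (Real.sqrt (κ ^ 2 * (1 - γ1 - γ2) ^ 2 + (γ1 - γ2) ^ 2
      + 2 * κ * (γ1 * (1 - γ1) + γ2 * (1 - γ2))) - 1) / (2 * (κ - 1))
    - (1 - γ1 - γ2) / 2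

section LargerRoot

variable {a b c s x : ℝ}

theorem four_mul_quadratic_eq_sq_sub_sq (hs : discrim a b c = s * s) :
    4 * a * (a * (x * x) + b * x + c) = (2 * a * x + b) ^ 2 - s ^ 2 := by
  unfold discrim at hs
  linear_combination -hs

theorem le_larger_root_of_quadratic_nonpos (ha : 0 < a) (hs0 : 0 ≤ s)
    (hs : discrim a b c = s * s) (hx : a * (x * x) + b * x + c ≤ 0) :
    x ≤ (-b + s) / (2 * a) := by
  have hsq : (2 * a * x + b) ^ 2 ≤ s ^ 2 := by
    nlinarith [four_mul_quadratic_eq_sq_sub_sq (x := x) hs]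
  rw [le_div_iff₀ (by positivity)]
  linarith [le_of_sq_le_sq hsq hs0]

theorem larger_root_le_of_quadratic_nonneg (ha : 0 < a) (hs : discrim a b c = s * s)
    (hvertex : 0 ≤ 2 * a * x + b) (hx : 0 ≤ a * (x * x) + b * x + c) :
    (-b + s) / (2 * a) ≤ x := by
  have hsq : s ^ 2 ≤ (2 * a * x + b) ^ 2 := by
    nlinarith [four_mul_quadratic_eq_sq_sub_sq (x := x) hs]
  rw [div_le_iff₀ (by positivity)]
  linarith [le_of_sq_le_sq hsq hvertex]

end LargerRoot

section PStar

variable (κ γ1 γ2 : ℝ)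

theorem discrim_pStar_quadratic (hκ : 1 < κ) (hγ1 : 0 < γ1) (hγ2 : 0 < γ2) :
    discrim (κ - 1) ((κ - 1) * (1 - γ1 - γ2) + 1) (-(γ1 * γ2)) =
      Real.sqrt (κ ^ 2 * (1 - γ1 - γ2) ^ 2 + (γ1 - γ2) ^ 2
        + 2 * κ * (γ1 * (1 - γ1) + γ2 * (1 - γ2))) *
      Real.sqrt (κ ^ 2 * (1 - γ1 - γ2) ^ 2 + (γ1 - γ2) ^ 2
        + 2 * κ * (γ1 * (1 - γ1) + γ2 * (1 - γ2))) := by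
  rw [Real.mul_self_sqrt]
  · unfold discrim
    ring
  · nlinarith [sq_nonneg ((κ - 1) * (1 - γ1 - γ2) + 1),
      mul_pos (mul_pos (sub_pos.2 hκ) hγ1) hγ2]

theorem pStar_eq_larger_root (hκ : κ ≠ 1) :
    pStar κ γ1 γ2 = (-((κ - 1) * (1 - γ1 - γ2) + 1) + Real.sqrt (κ ^ 2 * (1 - γ1 - γ2) ^ 2
      + (γ1 - γ2) ^ 2 + 2 * κ * (γ1 * (1 - γ1) + γ2 * (1 - γ2)))) / (2 * (κ - 1)) := by
  have : κ - 1 ≠ 0 := sub_ne_zero.2 hκ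
  unfold pStar
  field_simp
  ring

theorem quadratic_eq_pStar_equation_sub (p : ℝ) :
    (κ - 1) * (p * p) + ((κ - 1) * (1 - γ1 - γ2) + 1) * p + -(γ1 * γ2) =
      κ * p * (1 + p - γ1 - γ2) - (γ1 - p) * (γ2 - p) := by
  ring

end PStar

theorem stmt_11_general (κ γ1 γ2 : ℝ) (hκ : 1 < κ)
    (hγ1 : 0 < γ1) (hγ2 : 0 < γ2)
    (hsum : γ1 + γ2 < 1) :
    κ * pStar κ γ1 γ2 * (1 + pStar κ γ1 γ2 - γ1 - γ2)
      = (γ1 - pStar κ γ1 γ2) * (γ2 - pStar κ γ1 γ2) ∧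
    pStar κ γ1 γ2 ∈ Set.Icc (max 0 (γ1 + γ2 - 1)) (min γ1 γ2) := by
  have ha : 0 < κ - 1 := sub_pos.2 hκ
  have hdisc := discrim_pStar_quadratic κ γ1 γ2 hκ hγ1 hγ2
  have hq := quadratic_eq_pStar_equation_sub κ γ1 γ2
  rw [pStar_eq_larger_root κ γ1 γ2 hκ.ne']
  refine ⟨sub_eq_zero.1 ((hq _).symm.trans
    ((quadratic_eq_zero_iff ha.ne' hdisc _).2 (Or.inl rfl))), ?_, ?_⟩
  · rw [max_eq_left (by linarith)]
    refine le_larger_root_of_quadratic_nonpos ha (Real.sqrt_nonneg _) hdisc ?_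
    rw [hq]
    nlinarith
  · have hb : 0 < (κ - 1) * (1 - γ1 - γ2) + 1 := by nlinarith
    refine le_min (larger_root_le_of_quadratic_nonneg ha hdisc (by positivity) ?_)
      (larger_root_le_of_quadratic_nonneg ha hdisc (by positivity) ?_)
    · rw [hq, sub_self, zero_mul, sub_zero]
      nlinarith [mul_pos (mul_pos (by linarith : (0 : ℝ) < κ) hγ1) (by linarith : 0 < 1 - γ2)]
    · rw [hq, sub_self, mul_zero, sub_zero]
      nlinarith [mul_pos (mul_pos (by linarith : (0 : ℝ) < κ) hγ2) (by linarith : 0 < 1 - γ1)]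

theorem stmt_11 (κ γ1 γ2 : ℝ) (hκ : 1 < κ)
    (hγ1 : 0 < γ1) (hγ1' : γ1 < 1) (hγ2 : 0 < γ2) (hγ2' : γ2 < 1)
    (hsum : γ1 + γ2 < 1) :
    κ * pStar κ γ1 γ2 * (1 + pStar κ γ1 γ2 - γ1 - γ2)
      = (γ1 - pStar κ γ1 γ2) * (γ2 - pStar κ γ1 γ2) ∧
    pStar κ γ1 γ2 ∈ Set.Icc (max 0 (γ1 + γ2 - 1)) (min γ1 γ2) :=
  stmt_11_general κ γ1 γ2 hκ hγ1 hγ2 hsum
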